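/- arXiv:2510.18183 — 4 statements merged into one kernel-verified Lean document; each statement's English description precedes it below -/
import Mathlib

section
/- Let F be a monotone operator on a closed convex set Z, ψ a differentiable strongly convex function, α > 0, and ρ ∈ int dom ψ ∩ Z. Suppose z* ∈ Z solves the variational inequality VI(Z, F) (i.e., ⟨F(z*), z − z*⟩ ≥ 0 for all z ∈ Z), and suppose ẑ ∈ int dom ψ ∩ Z solves the regularized variational inequality VI(Z, G_ρ) where G_ρ(z) = F(z) + α(∇ψ(z) − ∇ψ(ρ)). Then B_ψ(z*; ρ) ≥ B_ψ(z*; ẑ) + B_ψ(ẑ; ρ). -/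
open scoped RealInnerProductSpace

/-- Bregman divergence of `ψ` with gradient map `g`. -/
noncomputable def breg {E : Type*} [NormedAddCommGroup E] [InnerProductSpace ℝ E]
    (ψ : E → ℝ) (g : E → E) (a b : E) : ℝ :=
  ψ a - ψ b - ⟪g b, a - b⟫

/-!
The three-point identity `B(z*; ρ) = B(z*; ẑ) + B(ẑ; ρ) + ⟪∇ψ(ẑ) - ∇ψ(ρ), z* - ẑ⟫` reduces the
claim to the nonnegativity of the last term. Testing the regularized VI at `z*` bounds
`α ⟪∇ψ(ẑ) - ∇ψ(ρ), z* - ẑ⟫` below by `⟪F ẑ, ẑ - z*⟫`, which is nonnegative by monotonicity of `F`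
(Minty's inequality for the solution `z*` of `VI(Z, F)`).
-/

section

variable {E : Type*} [NormedAddCommGroup E] [InnerProductSpace ℝ E]

theorem breg_three_point (ψ : E → ℝ) (g : E → E) (a b c : E) :
    breg ψ g a c = breg ψ g a b + breg ψ g b c + ⟪g b - g c, a - b⟫ := by
  have hsplit : ⟪g c, a - c⟫ = ⟪g c, a - b⟫ + ⟪g c, b - c⟫ := by
    rw [← inner_add_right, sub_add_sub_cancel]
  simp only [breg, inner_sub_left]
  linarith

theorem minty_of_solves_vi {Z : Set E} {F : E → E}
    (hF : ∀ u ∈ Z, ∀ v ∈ Z, ⟪F u - F v, u - v⟫ ≥ 0)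
    {zs : E} (hzs : zs ∈ Z) (hVI : ∀ z ∈ Z, ⟪F zs, z - zs⟫ ≥ 0) :
    ∀ z ∈ Z, 0 ≤ ⟪F z, z - zs⟫ := by
  intro z hz
  have hmono := hF z hz zs hzs
  rw [inner_sub_left] at hmono
  linarith [hVI z hz]

end

theorem bregman_distance_non_increase_general {E : Type*} [NormedAddCommGroup E]
    [InnerProductSpace ℝ E]
    (Z : Set E) (F : E → E)
    (hF : ∀ u ∈ Z, ∀ v ∈ Z, ⟪F u - F v, u - v⟫ ≥ 0)
    (ψ : E → ℝ) (g : E → E) (D : Set E)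
    (α : ℝ) (hα : 0 < α) (ρ : E)
    (zs : E) (hzs : zs ∈ Z) (hVI : ∀ z ∈ Z, ⟪F zs, z - zs⟫ ≥ 0)
    (zh : E) (hzh : zh ∈ interior D ∩ Z)
    (hVIr : ∀ z ∈ Z, ⟪F zh + α • (g zh - g ρ), z - zh⟫ ≥ 0) :
    breg ψ g zs ρ ≥ breg ψ g zs zh + breg ψ g zh ρ := by
  have hminty := minty_of_solves_vi hF hzs hVI zh hzh.2
  have hreg := hVIr zs hzs
  rw [← neg_sub, inner_neg_right] at hminty
  rw [inner_add_left, real_inner_smul_left] at hreg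
  have hcross : 0 ≤ ⟪g zh - g ρ, zs - zh⟫ :=
    nonneg_of_mul_nonneg_right (by linarith) hα
  rw [breg_three_point ψ g zs zh ρ]
  linarith

/-- Distance non-increase: for a Nash equilibrium `zs` (solution of `VI(Z,F)`) and the
solution `zh` of the regularized VI with reference `ρ`,
`B_ψ(z*; ρ) ≥ B_ψ(z*; ẑ) + B_ψ(ẑ; ρ)`. -/
theorem bregman_distance_non_increase {E : Type*} [NormedAddCommGroup E]
    [InnerProductSpace ℝ E]
    (Z : Set E) (hZc : IsClosed Z) (hZ : Convex ℝ Z) (F : E → E)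
    (hF : ∀ u ∈ Z, ∀ v ∈ Z, ⟪F u - F v, u - v⟫ ≥ 0)
    (ψ : E → ℝ) (g : E → E) (D : Set E) (μ : ℝ) (hμ : 0 < μ)
    (hsc : ∀ x y : E, ψ y ≥ ψ x + ⟪g x, y - x⟫ + μ / 2 * ‖y - x‖ ^ 2)
    (α : ℝ) (hα : 0 < α) (ρ : E) (hρ : ρ ∈ interior D ∩ Z)
    (zs : E) (hzs : zs ∈ Z) (hVI : ∀ z ∈ Z, ⟪F zs, z - zs⟫ ≥ 0)
    (zh : E) (hzh : zh ∈ interior D ∩ Z)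
    (hVIr : ∀ z ∈ Z, ⟪F zh + α • (g zh - g ρ), z - zh⟫ ≥ 0) :
    breg ψ g zs ρ ≥ breg ψ g zs zh + breg ψ g zh ρ :=
  bregman_distance_non_increase_general Z F hF ψ g D α hα ρ zs hzs hVI zh hzh hVIr
end

section
/- Let F be a monotone operator on a closed convex set Z, ψ μ-strongly convex and differentiable, α > 0. For references ρ₁, ρ₂ in int dom ψ ∩ Z, let z₁ and z₂ denote solutions of VI(Z, G_{ρ₁}) and VI(Z, G_{ρ₂}) respectively, where G_ρ(z) = F(z) + α(∇ψ(z) − ∇ψ(ρ)). Then ‖z₁ − z₂‖ ≤ (1/μ)‖∇ψ(ρ₁) − ∇ψ(ρ₂)‖. -/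
open scoped RealInnerProductSpace

/-!
Adding the two variational inequalities, each tested at the other solution, and using the
`αμ`-strong monotonicity of `z ↦ F z + α ∇ψ(z)` gives
`αμ ‖z₁ - z₂‖² ≤ α ⟪∇ψ(ρ₁) - ∇ψ(ρ₂), z₁ - z₂⟫`; Cauchy–Schwarz finishes the proof.
-/

section VariationalInequality

variable {E : Type*} [NormedAddCommGroup E] [InnerProductSpace ℝ E]

def StronglyMonotoneOn (m : ℝ) (G : E → E) (Z : Set E) : Prop :=
  ∀ u ∈ Z, ∀ v ∈ Z, m * ‖u - v‖ ^ 2 ≤ ⟪G u - G v, u - v⟫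

def IsVISolution (Z : Set E) (G : E → E) (z : E) : Prop :=
  z ∈ Z ∧ ∀ w ∈ Z, 0 ≤ ⟪G z, w - z⟫

theorem stronglyMonotoneOn_of_strongConvex {ψ : E → ℝ} {g : E → E} {μ : ℝ}
    (hsc : ∀ x y : E, ψ y ≥ ψ x + ⟪g x, y - x⟫ + μ / 2 * ‖y - x‖ ^ 2) (Z : Set E) :
    StronglyMonotoneOn μ g Z := by
  intro u _ v _
  have huv := hsc u v
  have hvu := hsc v u
  rw [← neg_sub u v, norm_neg, inner_neg_right] at huv
  rw [inner_sub_left]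
  linarith

theorem StronglyMonotoneOn.add {m₁ m₂ : ℝ} {G₁ G₂ : E → E} {Z : Set E}
    (h₁ : StronglyMonotoneOn m₁ G₁ Z) (h₂ : StronglyMonotoneOn m₂ G₂ Z) :
    StronglyMonotoneOn (m₁ + m₂) (G₁ + G₂) Z := by
  intro u hu v hv
  have hsum : ⟪(G₁ + G₂) u - (G₁ + G₂) v, u - v⟫ =
      ⟪G₁ u - G₁ v, u - v⟫ + ⟪G₂ u - G₂ v, u - v⟫ := by
    rw [Pi.add_apply, Pi.add_apply, add_sub_add_comm, inner_add_left]
  linarith [hsum, h₁ u hu v hv, h₂ u hu v hv]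

theorem StronglyMonotoneOn.const_smul {m c : ℝ} {G : E → E} {Z : Set E}
    (h : StronglyMonotoneOn m G Z) (hc : 0 ≤ c) :
    StronglyMonotoneOn (c * m) (c • G) Z := by
  intro u hu v hv
  rw [Pi.smul_apply, Pi.smul_apply, ← smul_sub, real_inner_smul_left, mul_assoc]
  exact mul_le_mul_of_nonneg_left (h u hu v hv) hc

theorem IsVISolution.norm_sub_le_of_sub_const {m : ℝ} {G : E → E} {Z : Set E}
    (hG : StronglyMonotoneOn m G Z) (hm : 0 < m) {a₁ a₂ z₁ z₂ : E}
    (h₁ : IsVISolution Z (fun z => G z - a₁) z₁) (h₂ : IsVISolution Z (fun z => G z - a₂) z₂) :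
    ‖z₁ - z₂‖ ≤ ‖a₁ - a₂‖ / m := by
  have hVI : m * ‖z₁ - z₂‖ ^ 2 ≤ ⟪a₁ - a₂, z₁ - z₂⟫ := by
    have t₁ : 0 ≤ ⟪G z₁ - a₁, z₂ - z₁⟫ := h₁.2 z₂ h₂.1
    have t₂ : 0 ≤ ⟪G z₂ - a₂, z₁ - z₂⟫ := h₂.2 z₁ h₁.1
    have hmono := hG z₁ h₁.1 z₂ h₂.1
    rw [← neg_sub z₁ z₂, inner_neg_right] at t₁
    simp only [inner_sub_left] at t₁ t₂ hmono ⊢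
    linarith
  have hCS : m * ‖z₁ - z₂‖ ^ 2 ≤ ‖a₁ - a₂‖ * ‖z₁ - z₂‖ :=
    hVI.trans (real_inner_le_norm _ _)
  rw [le_div_iff₀ hm]
  rcases (norm_nonneg (z₁ - z₂)).eq_or_lt with h0 | hpos
  · rw [← h0, zero_mul]
    exact norm_nonneg _
  · rw [mul_comm]
    exact le_of_mul_le_mul_right (by rwa [sq, ← mul_assoc] at hCS) hpos

end VariationalInequality

theorem regularized_solution_stability_general {E : Type*} [NormedAddCommGroup E]
    [InnerProductSpace ℝ E]
    (Z : Set E) (F : E → E)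
    (hF : ∀ u ∈ Z, ∀ v ∈ Z, ⟪F u - F v, u - v⟫ ≥ 0)
    (ψ : E → ℝ) (g : E → E) (μ : ℝ) (hμ : 0 < μ)
    (hsc : ∀ x y : E, ψ y ≥ ψ x + ⟪g x, y - x⟫ + μ / 2 * ‖y - x‖ ^ 2)
    (α : ℝ) (hα : 0 < α)
    (ρ₁ ρ₂ : E)
    (z₁ z₂ : E) (hz₁ : z₁ ∈ Z) (hz₂ : z₂ ∈ Z)
    (hVI₁ : ∀ z ∈ Z, ⟪F z₁ + α • (g z₁ - g ρ₁), z - z₁⟫ ≥ 0)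
    (hVI₂ : ∀ z ∈ Z, ⟪F z₂ + α • (g z₂ - g ρ₂), z - z₂⟫ ≥ 0) :
    ‖z₁ - z₂‖ ≤ (1 / μ) * ‖g ρ₁ - g ρ₂‖ := by
  have hFmono : StronglyMonotoneOn 0 F Z := fun u hu v hv => by
    simpa using hF u hu v hv
  have hG : StronglyMonotoneOn (α * μ) (F + α • g) Z := by
    simpa using hFmono.add ((stronglyMonotoneOn_of_strongConvex hsc Z).const_smul hα.le)
  have hshift : ∀ z ρ, F z + α • (g z - g ρ) = (F + α • g) z - α • g ρ := fun z ρ => by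
    rw [Pi.add_apply, Pi.smul_apply, smul_sub, add_sub_assoc]
  have hsol₁ : IsVISolution Z (fun z => (F + α • g) z - α • g ρ₁) z₁ :=
    ⟨hz₁, fun w hw => by simpa only [hshift] using hVI₁ w hw⟩
  have hsol₂ : IsVISolution Z (fun z => (F + α • g) z - α • g ρ₂) z₂ :=
    ⟨hz₂, fun w hw => by simpa only [hshift] using hVI₂ w hw⟩
  calc ‖z₁ - z₂‖ ≤ ‖α • g ρ₁ - α • g ρ₂‖ / (α * μ) :=
        hsol₁.norm_sub_le_of_sub_const hG (mul_pos hα hμ) hsol₂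
    _ = (1 / μ) * ‖g ρ₁ - g ρ₂‖ := by
        rw [← smul_sub, norm_smul, Real.norm_of_nonneg hα.le]
        field_simp

/-- Stability of regularized VI solutions with respect to the reference point:
`‖z₁ - z₂‖ ≤ (1/μ) ‖∇ψ(ρ₁) - ∇ψ(ρ₂)‖`. -/
theorem regularized_solution_stability {E : Type*} [NormedAddCommGroup E]
    [InnerProductSpace ℝ E]
    (Z : Set E) (hZc : IsClosed Z) (hZ : Convex ℝ Z) (F : E → E)
    (hF : ∀ u ∈ Z, ∀ v ∈ Z, ⟪F u - F v, u - v⟫ ≥ 0)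
    (ψ : E → ℝ) (g : E → E) (D : Set E) (μ : ℝ) (hμ : 0 < μ)
    (hsc : ∀ x y : E, ψ y ≥ ψ x + ⟪g x, y - x⟫ + μ / 2 * ‖y - x‖ ^ 2)
    (α : ℝ) (hα : 0 < α)
    (ρ₁ ρ₂ : E) (hρ₁ : ρ₁ ∈ interior D ∩ Z) (hρ₂ : ρ₂ ∈ interior D ∩ Z)
    (z₁ z₂ : E) (hz₁ : z₁ ∈ Z) (hz₂ : z₂ ∈ Z)
    (hVI₁ : ∀ z ∈ Z, ⟪F z₁ + α • (g z₁ - g ρ₁), z - z₁⟫ ≥ 0)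
    (hVI₂ : ∀ z ∈ Z, ⟪F z₂ + α • (g z₂ - g ρ₂), z - z₂⟫ ≥ 0) :
    ‖z₁ - z₂‖ ≤ (1 / μ) * ‖g ρ₁ - g ρ₂‖ :=
  regularized_solution_stability_general Z F hF ψ g μ hμ hsc α hα ρ₁ ρ₂ z₁ z₂ hz₁ hz₂ hVI₁ hVI₂
end

section
/- If ψ is μ-strongly convex with continuously differentiable gradient ∇ψ on int dom ψ, and F is a monotone operator on a closed convex set Z, then the regularized VI solution map M, which sends ρ ∈ int dom ψ ∩ Z to the unique solution of VI(Z, G_ρ) with G_ρ(z) = F(z) + α(∇ψ(z) − ∇ψ(ρ)) for fixed α > 0, is continuous on int dom ψ ∩ Z. -/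
/-!
Strong convexity of `ψ` makes its gradient `g` strongly monotone with modulus `μ`. Testing the
variational inequality at `ρ₁` with `M ρ₂` and the one at `ρ₂` with `M ρ₁`, adding, and discarding
the monotone term of `F` gives `μ ‖M ρ₁ - M ρ₂‖² ≤ ⟪g ρ₁ - g ρ₂, M ρ₁ - M ρ₂⟫`, hence
`‖M ρ₁ - M ρ₂‖ ≤ μ⁻¹ ‖g ρ₁ - g ρ₂‖`, and continuity of `M` follows from that of `g`.
-/

open scoped RealInnerProductSpace

theorem ContinuousOn.of_dist_le_mul {X Y W : Type*} [PseudoMetricSpace X] [PseudoMetricSpace Y]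
    [PseudoMetricSpace W] {f : X → Y} {g : X → W} {s : Set X} {C : ℝ} (hg : ContinuousOn g s)
    (hfg : ∀ x ∈ s, ∀ y ∈ s, dist (f x) (f y) ≤ C * dist (g x) (g y)) :
    ContinuousOn f s := by
  intro x hx
  have hgx : Filter.Tendsto (fun y => C * dist (g y) (g x)) (nhdsWithin x s) (nhds 0) := by
    simpa using ((tendsto_iff_dist_tendsto_zero).1 (hg x hx)).const_mul C
  refine (tendsto_iff_dist_tendsto_zero).2 <|
    squeeze_zero' (Filter.Eventually.of_forall fun _ => dist_nonneg) ?_ hgx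
  filter_upwards [self_mem_nhdsWithin] with y hy
  exact hfg y hy x hx

section InnerProductSpace

variable {E : Type*} [NormedAddCommGroup E] [InnerProductSpace ℝ E]

theorem norm_le_inv_mul_of_mul_norm_sq_le_inner {μ : ℝ} (hμ : 0 < μ) {x y : E}
    (h : μ * ‖x‖ ^ 2 ≤ ⟪y, x⟫) : ‖x‖ ≤ μ⁻¹ * ‖y‖ := by
  have hyx : μ * ‖x‖ * ‖x‖ ≤ ‖y‖ * ‖x‖ := by
    nlinarith [real_inner_le_norm y x]
  rcases (norm_nonneg x).eq_or_lt with hx | hx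
  · rw [← hx]
    positivity
  · rw [le_inv_mul_iff₀ hμ]
    exact le_of_mul_le_mul_right hyx hx

theorem mul_norm_sq_le_inner_sub_of_strong_convexity {ψ : E → ℝ} {g : E → E} {μ : ℝ}
    (hsc : ∀ x y : E, ψ y ≥ ψ x + ⟪g x, y - x⟫ + μ / 2 * ‖y - x‖ ^ 2) (x y : E) :
    μ * ‖x - y‖ ^ 2 ≤ ⟪g x - g y, x - y⟫ := by
  have hxy := hsc x y
  have hyx := hsc y x
  rw [norm_sub_rev] at hxy
  simp only [inner_sub_left, inner_sub_right] at hxy hyx ⊢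
  linarith

theorem inner_sub_le_of_regularized_vi {Z : Set E} {F g : E → E} {α : ℝ} (hα : 0 < α)
    (hF : ∀ u ∈ Z, ∀ v ∈ Z, ⟪F u - F v, u - v⟫ ≥ 0) {a b u v : E} (hu : u ∈ Z) (hv : v ∈ Z)
    (hvi_u : ∀ z ∈ Z, ⟪F u + α • (g u - a), z - u⟫ ≥ 0)
    (hvi_v : ∀ z ∈ Z, ⟪F v + α • (g v - b), z - v⟫ ≥ 0) :
    ⟪g u - g v, u - v⟫ ≤ ⟪a - b, u - v⟫ := by
  have hu' := hvi_u v hv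
  have hv' := hvi_v u hu
  have hmono := hF u hu v hv
  simp only [inner_add_left, inner_sub_left, inner_sub_right, real_inner_smul_left]
    at hu' hv' hmono ⊢
  nlinarith

end InnerProductSpace

theorem regularized_solution_map_continuous_general {E : Type*} [NormedAddCommGroup E]
    [InnerProductSpace ℝ E]
    (Z : Set E) (F : E → E)
    (hF : ∀ u ∈ Z, ∀ v ∈ Z, ⟪F u - F v, u - v⟫ ≥ 0)
    (ψ : E → ℝ) (g : E → E) (D : Set E) (μ : ℝ) (hμ : 0 < μ)
    (hsc : ∀ x y : E, ψ y ≥ ψ x + ⟪g x, y - x⟫ + μ / 2 * ‖y - x‖ ^ 2)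
    (hgcont : ContinuousOn g (interior D))
    (α : ℝ) (hα : 0 < α)
    (M : E → E)
    (hM : ∀ ρ ∈ interior D ∩ Z, M ρ ∈ interior D ∩ Z ∧
      ∀ z ∈ Z, ⟪F (M ρ) + α • (g (M ρ) - g ρ), z - M ρ⟫ ≥ 0) :
    ContinuousOn M (interior D ∩ Z) := by
  refine (hgcont.mono Set.inter_subset_left).of_dist_le_mul (C := μ⁻¹) ?_
  intro ρ₁ hρ₁ ρ₂ hρ₂
  obtain ⟨⟨-, hZ₁⟩, hvi₁⟩ := hM ρ₁ hρ₁
  obtain ⟨⟨-, hZ₂⟩, hvi₂⟩ := hM ρ₂ hρ₂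
  rw [dist_eq_norm, dist_eq_norm]
  exact norm_le_inv_mul_of_mul_norm_sq_le_inner hμ <|
    (mul_norm_sq_le_inner_sub_of_strong_convexity hsc _ _).trans
      (inner_sub_le_of_regularized_vi hα hF hZ₁ hZ₂ hvi₁ hvi₂)

/-- Continuity of the regularized VI solution map `M` on `int dom ψ ∩ Z`. -/
theorem regularized_solution_map_continuous {E : Type*} [NormedAddCommGroup E]
    [InnerProductSpace ℝ E]
    (Z : Set E) (hZc : IsClosed Z) (hZ : Convex ℝ Z) (F : E → E)
    (hF : ∀ u ∈ Z, ∀ v ∈ Z, ⟪F u - F v, u - v⟫ ≥ 0)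
    (ψ : E → ℝ) (g : E → E) (D : Set E) (μ : ℝ) (hμ : 0 < μ)
    (hsc : ∀ x y : E, ψ y ≥ ψ x + ⟪g x, y - x⟫ + μ / 2 * ‖y - x‖ ^ 2)
    (hgcont : ContinuousOn g (interior D))
    (α : ℝ) (hα : 0 < α)
    (M : E → E)
    (hM : ∀ ρ ∈ interior D ∩ Z, M ρ ∈ interior D ∩ Z ∧
      ∀ z ∈ Z, ⟪F (M ρ) + α • (g (M ρ) - g ρ), z - M ρ⟫ ≥ 0) :
    ContinuousOn M (interior D ∩ Z) :=
  regularized_solution_map_continuous_general Z F hF ψ g D μ hμ hsc hgcont α hα M hM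
end

section
/- Under the iterative refinement procedure z_{t+1} = M(z_t), where M(ρ) is the unique solution of the regularized VI VI(Z, G_ρ) with G_ρ(z) = F(z) + α(∇ψ(z) − ∇ψ(ρ)), F monotone and ψ strongly convex differentiable: for any solution z* of VI(Z, F) and any t with z_{t+1} ≠ z_t, the strict inequality B_ψ(z*; z_t) > B_ψ(z*; z_{t+1}) holds. -/
open scoped RealInnerProductSpace

/-!
If `m = M(ρ)`, the three-point identity
`B(z*; ρ) = B(z*; m) + B(m; ρ) + ⟪∇ψ(m) - ∇ψ(ρ), z* - m⟫` reduces the claim to the sign of the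
last term. Testing the regularized VI at `z*` and the VI of `F` at `m`, and adding the
monotonicity of `F` on the pair `(m, z*)`, shows `α ⟪∇ψ(m) - ∇ψ(ρ), z* - m⟫ ≥ 0`. Strong
convexity makes `B(m; ρ) ≥ μ/2 ‖m - ρ‖² > 0` as soon as `m ≠ ρ`.
-/

namespace Breg

variable {E : Type*} [NormedAddCommGroup E] [InnerProductSpace ℝ E]

theorem three_point (ψ : E → ℝ) (g : E → E) (a b c : E) :
    breg ψ g a c = breg ψ g a b + breg ψ g b c + ⟪g b - g c, a - b⟫ := by
  have hsplit : a - c = (a - b) + (b - c) := by abel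
  simp only [breg, hsplit, inner_add_right, inner_sub_left]
  ring

theorem half_mul_norm_sub_sq_le {ψ : E → ℝ} {g : E → E} {μ : ℝ}
    (hsc : ∀ x y : E, ψ y ≥ ψ x + ⟪g x, y - x⟫ + μ / 2 * ‖y - x‖ ^ 2) (a b : E) :
    μ / 2 * ‖a - b‖ ^ 2 ≤ breg ψ g a b := by
  have := hsc b a
  unfold breg
  linarith

theorem pos_of_ne {ψ : E → ℝ} {g : E → E} {μ : ℝ} (hμ : 0 < μ)
    (hsc : ∀ x y : E, ψ y ≥ ψ x + ⟪g x, y - x⟫ + μ / 2 * ‖y - x‖ ^ 2) {a b : E} (h : a ≠ b) :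
    0 < breg ψ g a b := by
  have hnorm : 0 < ‖a - b‖ := norm_sub_pos_iff.mpr h
  exact (by positivity : 0 < μ / 2 * ‖a - b‖ ^ 2).trans_le (half_mul_norm_sub_sq_le hsc a b)

end Breg

section RegularizedVI

variable {E : Type*} [NormedAddCommGroup E] [InnerProductSpace ℝ E]
  {Z : Set E} {F g : E → E} {α : ℝ} {ρ m zs : E}

theorem inner_grad_sub_nonneg_of_regularized_vi
    (hF : ∀ u ∈ Z, ∀ v ∈ Z, ⟪F u - F v, u - v⟫ ≥ 0) (hα : 0 < α)
    (hm : m ∈ Z) (hopt : ∀ z ∈ Z, ⟪F m + α • (g m - g ρ), z - m⟫ ≥ 0)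
    (hzs : zs ∈ Z) (hVI : ∀ z ∈ Z, ⟪F zs, z - zs⟫ ≥ 0) :
    0 ≤ ⟪g m - g ρ, zs - m⟫ := by
  have hreg := hopt zs hzs
  have hsol := hVI m hm
  have hmono := hF m hm zs hzs
  have hflip : ⟪F m, zs - m⟫ = -⟪F m, m - zs⟫ := by rw [← inner_neg_right, neg_sub]
  rw [inner_add_left, real_inner_smul_left] at hreg
  rw [inner_sub_left] at hmono
  have : 0 ≤ α * ⟪g m - g ρ, zs - m⟫ := by linarith
  exact nonneg_of_mul_nonneg_right (by linarith) hα

theorem breg_add_breg_le_of_regularized_vi (ψ : E → ℝ)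
    (hF : ∀ u ∈ Z, ∀ v ∈ Z, ⟪F u - F v, u - v⟫ ≥ 0) (hα : 0 < α)
    (hm : m ∈ Z) (hopt : ∀ z ∈ Z, ⟪F m + α • (g m - g ρ), z - m⟫ ≥ 0)
    (hzs : zs ∈ Z) (hVI : ∀ z ∈ Z, ⟪F zs, z - zs⟫ ≥ 0) :
    breg ψ g zs m + breg ψ g m ρ ≤ breg ψ g zs ρ := by
  rw [Breg.three_point ψ g zs m ρ]
  linarith [inner_grad_sub_nonneg_of_regularized_vi hF hα hm hopt hzs hVI]

end RegularizedVI

theorem iterative_refinement_strict_decrease_general {E : Type*} [NormedAddCommGroup E]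
    [InnerProductSpace ℝ E]
    (Z : Set E) (F : E → E)
    (hF : ∀ u ∈ Z, ∀ v ∈ Z, ⟪F u - F v, u - v⟫ ≥ 0)
    (ψ : E → ℝ) (g : E → E) (D : Set E) (μ : ℝ) (hμ : 0 < μ)
    (hsc : ∀ x y : E, ψ y ≥ ψ x + ⟪g x, y - x⟫ + μ / 2 * ‖y - x‖ ^ 2)
    (α : ℝ) (hα : 0 < α)
    (M : E → E)
    (hM : ∀ ρ ∈ interior D ∩ Z, M ρ ∈ interior D ∩ Z ∧
      ∀ z ∈ Z, ⟪F (M ρ) + α • (g (M ρ) - g ρ), z - M ρ⟫ ≥ 0)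
    (zseq : ℕ → E)
    (hiter : ∀ t, zseq (t + 1) = M (zseq t))
    (hmem : ∀ t, zseq t ∈ interior D ∩ Z)
    (zs : E) (hzs : zs ∈ Z) (hVI : ∀ z ∈ Z, ⟪F zs, z - zs⟫ ≥ 0)
    (t : ℕ) (hne : zseq (t + 1) ≠ zseq t) :
    breg ψ g zs (zseq t) > breg ψ g zs (zseq (t + 1)) := by
  obtain ⟨⟨-, hmZ⟩, hopt⟩ := hM (zseq t) (hmem t)
  rw [hiter t] at hne ⊢
  have hnonincrease := breg_add_breg_le_of_regularized_vi ψ hF hα hmZ hopt hzs hVI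
  have hstep := Breg.pos_of_ne hμ hsc hne
  linarith

/-- Strict monotone improvement of the iterative refinement `z_{t+1} = M(z_t)`:
if `z_{t+1} ≠ z_t`, then `B_ψ(z*; z_t) > B_ψ(z*; z_{t+1})`. -/
theorem iterative_refinement_strict_decrease {E : Type*} [NormedAddCommGroup E]
    [InnerProductSpace ℝ E]
    (Z : Set E) (hZc : IsClosed Z) (hZ : Convex ℝ Z) (F : E → E)
    (hF : ∀ u ∈ Z, ∀ v ∈ Z, ⟪F u - F v, u - v⟫ ≥ 0)
    (ψ : E → ℝ) (g : E → E) (D : Set E) (μ : ℝ) (hμ : 0 < μ)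
    (hsc : ∀ x y : E, ψ y ≥ ψ x + ⟪g x, y - x⟫ + μ / 2 * ‖y - x‖ ^ 2)
    (α : ℝ) (hα : 0 < α)
    (M : E → E)
    (hM : ∀ ρ ∈ interior D ∩ Z, M ρ ∈ interior D ∩ Z ∧
      ∀ z ∈ Z, ⟪F (M ρ) + α • (g (M ρ) - g ρ), z - M ρ⟫ ≥ 0)
    (zseq : ℕ → E) (hz0 : zseq 0 ∈ interior D ∩ Z)
    (hiter : ∀ t, zseq (t + 1) = M (zseq t))
    (hmem : ∀ t, zseq t ∈ interior D ∩ Z)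
    (zs : E) (hzs : zs ∈ Z) (hVI : ∀ z ∈ Z, ⟪F zs, z - zs⟫ ≥ 0)
    (t : ℕ) (hne : zseq (t + 1) ≠ zseq t) :
    breg ψ g zs (zseq t) > breg ψ g zs (zseq (t + 1)) :=
  iterative_refinement_strict_decrease_general Z F hF ψ g D μ hμ hsc α hα M hM zseq hiter hmem zs
    hzs hVI t hne
end
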